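/- arXiv:1705.01880 — 5 statements merged into one kernel-verified Lean document; each statement's English description precedes it below -/
import Mathlib

section
/- Let p be an odd prime and let H be the set of 2×2 matrices over Z/p²Z of the form [[1 + p(a-2b), 3p(b-a)],[-pb, 1 - p(a-2b)]] for a, b ∈ Z/p²Z. Then H is a subgroup of GL₂(Z/p²Z), every nonidentity element of H has order p, and H is closed under conjugation by τ = [[1,-3],[1,-2]]. -/
/-!
Writing `q = p`, every element of `H` is `1 + q N(a, b)` with `N` linear in `(a, b)`. Since
`q² = 0` in `ZMod (p ^ 2)`, the quadratic term of a product vanishes, so `(a, b) ↦ M(a, b)` is a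
homomorphism from the additive group of pairs. Hence `H` is a subgroup, `M(a, b) ^ p = M(q a, q b)`
is the identity, and conjugation by `τ` acts on the parameters by `(a, b) ↦ (-b, a - b)`.
-/

open Matrix

section hMatrix

variable {R : Type*} [CommRing R]

def hMatrix (q a b : R) : Matrix (Fin 2) (Fin 2) R :=
  !![1 + q * (a - 2 * b), 3 * q * (b - a); -(q * b), 1 - q * (a - 2 * b)]

@[simp]
lemma hMatrix_zero_zero (q : R) : hMatrix q 0 0 = 1 := by
  ext i j
  fin_cases i <;> fin_cases j <;> simp [hMatrix]

lemma hMatrix_mul_hMatrix {q : R} (hq : q * q = 0) (a b c d : R) :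
    hMatrix q a b * hMatrix q c d = hMatrix q (a + c) (b + d) := by
  ext i j
  fin_cases i <;> fin_cases j <;> simp [hMatrix, Matrix.mul_apply, Fin.sum_univ_two]
  · linear_combination ((a - 2 * b) * (c - 2 * d) - 3 * (b - a) * d) * hq
  · linear_combination (3 * (a - 2 * b) * (d - c) - 3 * (b - a) * (c - 2 * d)) * hq
  · linear_combination (a * d - b * c) * hq
  · linear_combination ((a - 2 * b) * (c - 2 * d) - 3 * b * (d - c)) * hq

lemma hMatrix_mul_hMatrix_neg {q : R} (hq : q * q = 0) (a b : R) :
    hMatrix q a b * hMatrix q (-a) (-b) = 1 := by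
  simp [hMatrix_mul_hMatrix hq]

lemma isUnit_hMatrix {q : R} (hq : q * q = 0) (a b : R) : IsUnit (hMatrix q a b) :=
  ⟨⟨_, _, hMatrix_mul_hMatrix_neg hq a b, by simpa using hMatrix_mul_hMatrix_neg hq (-a) (-b)⟩,
    rfl⟩

lemma inv_hMatrix {q : R} (hq : q * q = 0) (a b : R) :
    (hMatrix q a b)⁻¹ = hMatrix q (-a) (-b) :=
  inv_eq_right_inv (hMatrix_mul_hMatrix_neg hq a b)

lemma hMatrix_pow {q : R} (hq : q * q = 0) (a b : R) (n : ℕ) :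
    hMatrix q a b ^ n = hMatrix q (n * a) (n * b) := by
  induction n with
  | zero => simp
  | succ n ih =>
    rw [pow_succ, ih, hMatrix_mul_hMatrix hq]
    push_cast
    ring_nf

lemma hMatrix_mul_mul_eq_one {q : R} (hq : q * q = 0) (a b : R) :
    hMatrix q (q * a) (q * b) = 1 := by
  ext i j
  fin_cases i <;> fin_cases j <;> simp [hMatrix]
  · linear_combination (a - 2 * b) * hq
  · linear_combination 3 * (b - a) * hq
  · linear_combination b * hq
  · linear_combination (a - 2 * b) * hq

lemma hMatrix_natCast_pow_self {n : ℕ} (hn : (n : R) * n = 0) (a b : R) :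
    hMatrix (n : R) a b ^ n = 1 := by
  rw [hMatrix_pow hn, hMatrix_mul_mul_eq_one hn]

lemma tau_mul_hMatrix (q a b : R) :
    !![1, -3; 1, -2] * hMatrix q a b = hMatrix q (-b) (a - b) * !![1, -3; 1, -2] := by
  ext i j
  fin_cases i <;> fin_cases j <;> simp [hMatrix, Matrix.mul_apply, Fin.sum_univ_two] <;> ring

lemma tau_mul_hMatrix_mul_tau_inv (q a b : R) :
    !![1, -3; 1, -2] * hMatrix q a b * (!![1, -3; 1, -2] : Matrix (Fin 2) (Fin 2) R)⁻¹ =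
      hMatrix q (-b) (a - b) := by
  have hτ : (!![1, -3; 1, -2] : Matrix (Fin 2) (Fin 2) R).det = 1 := by
    rw [det_fin_two_of]
    ring
  rw [tau_mul_hMatrix, mul_assoc, mul_nonsing_inv _ (hτ.symm ▸ isUnit_one), mul_one]

end hMatrix

lemma ZMod.natCast_mul_self_eq_zero (p : ℕ) : (p : ZMod (p ^ 2)) * p = 0 := by
  rw [← Nat.cast_mul, ← sq, ZMod.natCast_self]

theorem H_subgroup_exponent_p_stable_under_tau_general
    (p : ℕ) (hp : p.Prime) :
    ∀ H : Set (Matrix (Fin 2) (Fin 2) (ZMod (p ^ 2))),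
      H = {M | ∃ a b : ZMod (p ^ 2),
        M = !![1 + (p : ZMod (p ^ 2)) * (a - 2 * b), 3 * (p : ZMod (p ^ 2)) * (b - a);
               -((p : ZMod (p ^ 2)) * b), 1 - (p : ZMod (p ^ 2)) * (a - 2 * b)]} →
      (∀ M ∈ H, IsUnit M) ∧
      (1 : Matrix (Fin 2) (Fin 2) (ZMod (p ^ 2))) ∈ H ∧
      (∀ M ∈ H, ∀ N ∈ H, M * N ∈ H) ∧
      (∀ M ∈ H, M⁻¹ ∈ H) ∧
      (∀ M ∈ H, M ≠ 1 → orderOf M = p) ∧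
      (∀ M ∈ H,
        (!![1, -3; 1, -2] : Matrix (Fin 2) (Fin 2) (ZMod (p ^ 2))) * M *
          (!![1, -3; 1, -2] : Matrix (Fin 2) (Fin 2) (ZMod (p ^ 2)))⁻¹ ∈ H) := by
  rintro H rfl
  have := Fact.mk hp
  have hq := ZMod.natCast_mul_self_eq_zero p
  refine ⟨?_, ⟨0, 0, (hMatrix_zero_zero _).symm⟩, ?_, ?_, ?_, ?_⟩
  · rintro _ ⟨a, b, rfl⟩
    exact isUnit_hMatrix hq a b
  · rintro _ ⟨a, b, rfl⟩ _ ⟨c, d, rfl⟩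
    exact ⟨a + c, b + d, hMatrix_mul_hMatrix hq a b c d⟩
  · rintro _ ⟨a, b, rfl⟩
    exact ⟨-a, -b, inv_hMatrix hq a b⟩
  · rintro _ ⟨a, b, rfl⟩ hne
    exact orderOf_eq_prime (hMatrix_natCast_pow_self hq a b) hne
  · rintro _ ⟨a, b, rfl⟩
    exact ⟨-b, a - b, tau_mul_hMatrix_mul_tau_inv _ a b⟩

/-- Let `p` be an odd prime and `H` the set of matrices
`[[1 + p(a-2b), 3p(b-a)],[-pb, 1 - p(a-2b)]]` over `ZMod (p^2)`, for `a b : ZMod (p^2)`.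
Then `H` is a subgroup of `GL₂(ZMod (p^2))` (all its elements are invertible, it
contains the identity, and it is closed under products and inverses), every
element of `H` distinct from the identity has order `p`, and `H` is stable under
conjugation by `τ = [[1,-3],[1,-2]]`. -/
theorem H_subgroup_exponent_p_stable_under_tau
    (p : ℕ) (hp : p.Prime) (hodd : Odd p) :
    ∀ H : Set (Matrix (Fin 2) (Fin 2) (ZMod (p ^ 2))),
      H = {M | ∃ a b : ZMod (p ^ 2),
        M = !![1 + (p : ZMod (p ^ 2)) * (a - 2 * b), 3 * (p : ZMod (p ^ 2)) * (b - a);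
               -((p : ZMod (p ^ 2)) * b), 1 - (p : ZMod (p ^ 2)) * (a - 2 * b)]} →
      (∀ M ∈ H, IsUnit M) ∧
      (1 : Matrix (Fin 2) (Fin 2) (ZMod (p ^ 2))) ∈ H ∧
      (∀ M ∈ H, ∀ N ∈ H, M * N ∈ H) ∧
      (∀ M ∈ H, M⁻¹ ∈ H) ∧
      (∀ M ∈ H, M ≠ 1 → orderOf M = p) ∧
      (∀ M ∈ H,
        (!![1, -3; 1, -2] : Matrix (Fin 2) (Fin 2) (ZMod (p ^ 2))) * M *
          (!![1, -3; 1, -2] : Matrix (Fin 2) (Fin 2) (ZMod (p ^ 2)))⁻¹ ∈ H) :=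
  H_subgroup_exponent_p_stable_under_tau_general p hp
end

section
/- Let p be an odd prime. The matrix σ = [[1+p, 1],[2p, 1+p]] over Z/p²Z satisfies σ^p = [[1, p],[0, 1]]; in particular σ has order p². -/
open Matrix

/-! Write `σ = 1 + B` with `B = [[p, 1], [2p, p]]`. Modulo `p²` one has `B² = p • [[2, 2], [0, 2]]`,
so in the binomial expansion of `(1 + B)^p` every term `C(p, k) B^k` with `2 ≤ k < p` is divisible
by `p²`, and `B^p = 0` because already `B⁴ = 0`. Hence `σ^p = 1 + pB = [[1, p], [0, 1]]`, and
applying the same expansion to `1 + pB` gives `σ^(p²) = 1 + p²B = 1`. -/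

section

variable {A : Type*} [Ring A] {p : ℕ} {B C : A}

open Finset in
theorem one_add_pow_prime_of_sq_eq_natCast_mul
    (hp : p.Prime) (hp4 : 4 ≤ p) (hp2 : (p : A) ^ 2 = 0) (hB : B ^ 2 = p * C) :
    (1 + B) ^ p = 1 + p * B := by
  have hpB2 : (p : A) * B ^ 2 = 0 := by rw [hB, ← mul_assoc, ← sq, hp2, zero_mul]
  have hB4 : B ^ 4 = 0 := by
    rw [show 4 = 2 + 2 from rfl, pow_add, hB, mul_assoc, ← mul_assoc C,
      ← (Nat.cast_commute p C).eq, ← mul_assoc, ← mul_assoc, ← sq, hp2, zero_mul, zero_mul]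
  have hmiddle : ∀ k ∈ range (p - 1), B ^ (k + 2) * (p.choose (k + 2) : A) = 0 := by
    intro k _
    rcases lt_or_ge (k + 2) p with hlt | hge
    · obtain ⟨m, hm⟩ := hp.dvd_choose_self (by omega) hlt
      rw [hm, Nat.cast_mul, pow_add, ← mul_assoc, mul_assoc (B ^ k),
        ← (Nat.cast_commute p (B ^ 2)).eq, hpB2, mul_zero, zero_mul]
    · rw [show k + 2 = 4 + (k + 2 - 4) by omega, pow_add, hB4, zero_mul, zero_mul]
  rw [add_comm, (Commute.one_right B).add_pow, show p + 1 = p - 1 + 2 by omega,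
    sum_range_succ', sum_range_succ']
  simp only [one_pow, mul_one, zero_add, sum_eq_zero hmiddle]
  simp [add_comm, (Nat.cast_commute p B).eq]

theorem orderOf_one_add_eq_prime_sq
    (hp : p.Prime) (hp4 : 4 ≤ p) (hp2 : (p : A) ^ 2 = 0) (hB : B ^ 2 = p * C)
    (hpB : (p : A) * B ≠ 0) : orderOf (1 + B) = p ^ 2 := by
  have : Fact p.Prime := ⟨hp⟩
  have hpow := one_add_pow_prime_of_sq_eq_natCast_mul hp hp4 hp2 hB
  have hpB_sq : ((p : A) * B) ^ 2 = p * 0 := by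
    rw [mul_zero, (Nat.cast_commute p B).mul_pow, hp2, zero_mul]
  apply orderOf_eq_prime_pow (n := 1)
  · rw [pow_one, hpow]
    simpa using hpB
  · rw [pow_succ, pow_one, pow_mul, hpow,
      one_add_pow_prime_of_sq_eq_natCast_mul hp hp4 hp2 hpB_sq, ← mul_assoc, ← sq, hp2,
      zero_mul, add_zero]

end

section

variable {R : Type*} [CommRing R] {p : ℕ}

variable (R p) in
def sigmaSubOne : Matrix (Fin 2) (Fin 2) R := !![(p : R), 1; 2 * p, p]

theorem one_add_sigmaSubOne :
    1 + sigmaSubOne R p = !![1 + (p : R), 1; 2 * (p : R), 1 + (p : R)] := by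
  rw [sigmaSubOne, one_fin_two, of_add_of]
  simp [add_comm]

theorem sigmaSubOne_sq (hp2 : (p : R) ^ 2 = 0) :
    sigmaSubOne R p ^ 2 = (p : Matrix (Fin 2) (Fin 2) R) * !![2, 2; 0, 2] := by
  rw [sq, sigmaSubOne, mul_fin_two, natCast_fin_two, mul_fin_two]
  ext i j
  fin_cases i <;> fin_cases j <;> simp <;> grind

theorem one_add_natCast_mul_sigmaSubOne (hp2 : (p : R) ^ 2 = 0) :
    1 + (p : Matrix (Fin 2) (Fin 2) R) * sigmaSubOne R p = !![1, (p : R); 0, 1] := by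
  rw [sigmaSubOne, natCast_fin_two, mul_fin_two, one_fin_two, of_add_of]
  ext i j
  fin_cases i <;> fin_cases j <;> simp <;> grind

theorem natCast_mul_sigmaSubOne_ne_zero (hp0 : (p : R) ≠ 0) :
    (p : Matrix (Fin 2) (Fin 2) R) * sigmaSubOne R p ≠ 0 := by
  rw [sigmaSubOne, natCast_fin_two, mul_fin_two]
  intro h
  simpa [hp0] using congr_fun (congr_fun h 0) 1

end

/-- Let `p ≥ 5` be a prime. The matrix `σ = [[1+p, 1],[2p, 1+p]]` over
`ZMod (p^2)` satisfies `σ^p = [[1, p],[0, 1]]`; in particular `σ` has order `p²`. -/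
theorem sigma_pth_power_and_order
    (p : ℕ) (hp : p.Prime) (hp5 : 5 ≤ p) :
    (!![1 + (p : ZMod (p ^ 2)), 1; 2 * (p : ZMod (p ^ 2)), 1 + (p : ZMod (p ^ 2))] :
        Matrix (Fin 2) (Fin 2) (ZMod (p ^ 2))) ^ p =
      !![1, (p : ZMod (p ^ 2)); 0, 1] ∧
    orderOf (!![1 + (p : ZMod (p ^ 2)), 1; 2 * (p : ZMod (p ^ 2)), 1 + (p : ZMod (p ^ 2))] :
        Matrix (Fin 2) (Fin 2) (ZMod (p ^ 2))) = p ^ 2 := by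
  have hp2 : (p : ZMod (p ^ 2)) ^ 2 = 0 := by exact_mod_cast ZMod.natCast_self (p ^ 2)
  have hp0 : (p : ZMod (p ^ 2)) ≠ 0 := fun h => hp.ne_zero <| Nat.eq_zero_of_dvd_of_lt
    ((ZMod.natCast_eq_zero_iff _ _).1 h) (lt_self_pow₀ hp.one_lt one_lt_two)
  have hpM : (p : Matrix (Fin 2) (Fin 2) (ZMod (p ^ 2))) ^ 2 = 0 := by
    exact_mod_cast CharP.cast_eq_zero (Matrix (Fin 2) (Fin 2) (ZMod (p ^ 2))) (p ^ 2)
  have hB := sigmaSubOne_sq hp2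
  rw [← one_add_sigmaSubOne]
  exact ⟨(one_add_pow_prime_of_sq_eq_natCast_mul hp (by omega) hpM hB).trans
      (one_add_natCast_mul_sigmaSubOne hp2),
    orderOf_one_add_eq_prime_sq hp (by omega) hpM hB (natCast_mul_sigmaSubOne_ne_zero hp0)⟩
end

section
/- Let p be an odd prime and consider the group G/H generated by ḡ of order 2 and σ̄ of order p with relation ḡσ̄ḡ⁻¹ = σ̄⁻¹ (dihedral of order 2p), acting on V[p] ≅ (Z/pZ)² where σ̄ acts as [[1,1],[0,1]] and ḡ acts as [[-1,0],[0,1]]. Then H¹(G/H, V[p]) = 0. -/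
/-!
A 1-cocycle is determined by its values on generators, so it suffices to match `Z` with a
coboundary `a ↦ a • v - v` on `g` and `σ`. The second coordinate is fixed by the whole group, so
it turns `Z` into a homomorphism to `ZMod p`; since the dihedral relations force such a
homomorphism to be killed by `2`, and `2` is invertible modulo the odd number `p`, both `Z g` and
`Z σ` lie on the first axis. As `g • v - v = (-2 v₀, 0)` and `σ • v - v = (v₁, 0)`, the vector
`v = (-Z g 0 / 2, Z σ 0)` does it.
-/

open groupCohomology

section Cocycle

variable {G A : Type*} [Group G]

theorem smul_invariant_of_closure_eq_top [MulAction G A] {B : Type*} {π : A → B} {s : Set G}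
    (hs : Subgroup.closure s = ⊤) (hπ : ∀ h ∈ s, ∀ x, π (h • x) = π x) (a : G) (x : A) :
    π (a • x) = π x := by
  induction (hs ▸ Subgroup.mem_top a : a ∈ Subgroup.closure s) using Subgroup.closure_induction
    generalizing x with
  | mem h hh => exact hπ h hh x
  | one => rw [one_smul]
  | mul a b _ _ ha hb => rw [mul_smul, ha, hb]
  | inv a _ ha => rw [← ha, smul_inv_smul]

variable [AddCommGroup A]

theorem isCocycle₁_eq_of_eqOn_closure_eq_top [MulAction G A] {f₁ f₂ : G → A}
    (hf₁ : IsCocycle₁ f₁) (hf₂ : IsCocycle₁ f₂) {s : Set G} (hs : Subgroup.closure s = ⊤)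
    (heq : Set.EqOn f₁ f₂ s) : f₁ = f₂ := by
  funext a
  induction (hs ▸ Subgroup.mem_top a : a ∈ Subgroup.closure s) using Subgroup.closure_induction
    with
  | mem h hh => exact heq hh
  | one => rw [map_one_of_isCocycle₁ hf₁, map_one_of_isCocycle₁ hf₂]
  | mul a b _ _ ha hb => rw [hf₁, hf₂, ha, hb]
  | inv a _ ha =>
    rw [← smul_left_cancel_iff a, map_inv_of_isCocycle₁ hf₁, map_inv_of_isCocycle₁ hf₂, ha]

theorem isCocycle₁_smul_sub [DistribMulAction G A] (x : A) : IsCocycle₁ fun a : G ↦ a • x - x := by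
  intro a b
  simp only [mul_smul, smul_sub]
  abel

theorem IsCocycle₁.map_mul_of_smul_invariant [MulAction G A] {B : Type*} [AddCommGroup B]
    {f : G → A} (hf : IsCocycle₁ f) {π : A →+ B} (hπ : ∀ (a : G) x, π (a • x) = π x) (a b : G) :
    π (f (a * b)) = π (f a) + π (f b) := by
  rw [hf, map_add, hπ, add_comm]

end Cocycle

theorem two_nsmul_eq_zero_of_dihedral {G B : Type*} [Group G] [AddCommGroup B] {φ : G → B}
    (hφ : ∀ a b, φ (a * b) = φ a + φ b) {g σ : G} (hg : g * g = 1) (hrel : g * σ * g⁻¹ = σ⁻¹) :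
    2 • φ g = 0 ∧ 2 • φ σ = 0 := by
  have hφ1 : φ 1 = 0 := by simpa using hφ 1 1
  have hφinv (a : G) : φ a⁻¹ = -φ a := by
    rw [eq_neg_iff_add_eq_zero, ← hφ, inv_mul_cancel, hφ1]
  have hconj : φ σ = -φ σ := by
    rw [← hφinv, ← hrel, hφ, hφ, hφinv]
    abel
  rw [two_nsmul, two_nsmul]
  exact ⟨by rw [← hφ, hg, hφ1], add_eq_zero_iff_eq_neg.mpr hconj⟩

theorem ZMod.isUnit_two_of_odd {p : ℕ} (hp : Odd p) : IsUnit (2 : ZMod p) := by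
  exact_mod_cast (ZMod.isUnit_iff_coprime 2 p).mpr (Nat.coprime_two_left.mpr hp)

theorem h1_dihedral_vanishes_general
    (p : ℕ) (hodd : Odd p)
    (G : Type*) [Group G] (g σ : G)
    (hgen : Subgroup.closure ({g, σ} : Set G) = ⊤)
    (hg : orderOf g = 2)
    (hrel : g * σ * g⁻¹ = σ⁻¹)
    [DistribMulAction G (Fin 2 → ZMod p)]
    (hactσ : ∀ v : Fin 2 → ZMod p, σ • v = ![v 0 + v 1, v 1])
    (hactg : ∀ v : Fin 2 → ZMod p, g • v = ![-(v 0), v 1])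
    (Z : G → (Fin 2 → ZMod p))
    (hZ : ∀ a b : G, Z (a * b) = a • Z b + Z a) :
    ∃ v : Fin 2 → ZMod p, ∀ a : G, Z a = a • v - v := by
  have h2 := ZMod.isUnit_two_of_odd hodd
  have hsnd_fixed : ∀ (a : G) (v : Fin 2 → ZMod p), (a • v) 1 = v 1 := by
    refine smul_invariant_of_closure_eq_top (π := fun v : Fin 2 → ZMod p ↦ v 1) hgen ?_
    rintro _ (rfl | rfl) v <;> simp [hactg, hactσ]
  have hhom := IsCocycle₁.map_mul_of_smul_invariant hZ (π := Pi.evalAddMonoidHom _ 1) hsnd_fixed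
  obtain ⟨hZg, hZσ⟩ := two_nsmul_eq_zero_of_dihedral (φ := fun a ↦ Z a 1) hhom
    (by rw [← sq, ← hg, pow_orderOf_eq_one]) hrel
  simp only [nsmul_eq_mul, Nat.cast_ofNat, h2.mul_right_eq_zero] at hZg hZσ
  set v : Fin 2 → ZMod p := ![-(Z g 0) * 2⁻¹, Z σ 0]
  have hv_g : Z g = g • v - v := by
    ext i
    fin_cases i
    · simp only [v, hactg, Fin.zero_eta, Pi.sub_apply, Matrix.cons_val_zero]
      linear_combination (-Z g 0) * ZMod.mul_inv_of_unit 2 h2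
    · simp [v, hactg, hZg]
  have hv_σ : Z σ = σ • v - v := by
    ext i
    fin_cases i <;> simp [v, hactσ, hZσ]
  refine ⟨v, fun a ↦ congrFun (isCocycle₁_eq_of_eqOn_closure_eq_top hZ (isCocycle₁_smul_sub v)
    hgen ?_) a⟩
  rintro _ (rfl | rfl)
  exacts [hv_g, hv_σ]

/-- Let `p` be an odd prime and `G` a dihedral group of order `2p`, generated by
`g` of order `2` and `σ` of order `p` with `g σ g⁻¹ = σ⁻¹`, acting on
`V = (ZMod p)²` via `σ ↦ [[1,1],[0,1]]` and `g ↦ [[-1,0],[0,1]]`. Then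
`H¹(G, V) = 0`: every 1-cocycle is a coboundary. -/
theorem h1_dihedral_vanishes
    (p : ℕ) (hp : p.Prime) (hodd : Odd p)
    (G : Type*) [Group G] (g σ : G)
    (hgen : Subgroup.closure ({g, σ} : Set G) = ⊤)
    (hg : orderOf g = 2) (hσ : orderOf σ = p)
    (hrel : g * σ * g⁻¹ = σ⁻¹)
    [DistribMulAction G (Fin 2 → ZMod p)]
    (hactσ : ∀ v : Fin 2 → ZMod p, σ • v = ![v 0 + v 1, v 1])
    (hactg : ∀ v : Fin 2 → ZMod p, g • v = ![-(v 0), v 1])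
    (Z : G → (Fin 2 → ZMod p))
    (hZ : ∀ a b : G, Z (a * b) = a • Z b + Z a) :
    ∃ v : Fin 2 → ZMod p, ∀ a : G, Z a = a • v - v :=
  h1_dihedral_vanishes_general p hodd G g σ hgen hg hrel hactσ hactg Z hZ
end

section
/- Let p be an odd prime, V = (Z/p²Z)², and G ≤ GL₂(Z/p²Z) generated by g = diag(λ, 1) with λ of order dividing p-1, h(1,0) = [[1+p,0],[0,1-p]] and h(0,1) = [[1,p],[0,1]]. Then H¹_loc(G, V) ≠ 0. -/
/-!
Every element of `G` is upper triangular, `[[a, b], [0, d]]` with `b ≡ 0`, `d ≡ 1 (mod p)` and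
`(a d) ^ (p - 1) = 1`. On such a group `γ ↦ (0, 1 - d)` is a cocycle because `p² = 0`, and it is
not a coboundary: `h(1,0)` and `h(0,1)` would force `p v₁ = -p` and `p v₁ = 0`. It is locally
trivial: with `v = (w, -1)` one needs `(a - 1) w = b`. This is solvable when `a - 1` is a unit;
otherwise `a d ≡ 1 (mod p)` and `(a d) ^ (p - 1) = 1` force `a d = 1` (as `(1 + x) ^ n = 1 + n x`
when `x² = 0`), so `a - 1 = -a (d - 1)`, and since `p (ℤ/p²)` is a line, either `d = 1`
and the cocycle vanishes at `γ`, or `d - 1` divides `b`.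
-/

open Matrix

section

variable {N : ℕ}

/-- The natural action of `GL₂(ZMod N)` on `(ZMod N)²`. -/
def glAct (γ : GL (Fin 2) (ZMod N)) (v : Fin 2 → ZMod N) : Fin 2 → ZMod N :=
  (γ : Matrix (Fin 2) (Fin 2) (ZMod N)).mulVec v

/-- `Z` is a 1-cocycle on the subgroup `G` with values in `(ZMod N)²`. -/
def IsCocycle (G : Subgroup (GL (Fin 2) (ZMod N))) (Z : G → (Fin 2 → ZMod N)) : Prop :=
  ∀ a b : G, Z (a * b) = glAct (a : GL (Fin 2) (ZMod N)) (Z b) + Z a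

/-- `Z` satisfies the local conditions: each value `Z a` is in the image of `a - Id`. -/
def SatisfiesLocalConditions (G : Subgroup (GL (Fin 2) (ZMod N)))
    (Z : G → (Fin 2 → ZMod N)) : Prop :=
  ∀ a : G, ∃ v : Fin 2 → ZMod N, Z a = glAct (a : GL (Fin 2) (ZMod N)) v - v

/-- `Z` is a 1-coboundary. -/
def IsCoboundary (G : Subgroup (GL (Fin 2) (ZMod N)))
    (Z : G → (Fin 2 → ZMod N)) : Prop :=
  ∃ v : Fin 2 → ZMod N, ∀ a : G, Z a = glAct (a : GL (Fin 2) (ZMod N)) v - v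

end

section TriangularSubgroup

variable {R : Type*} [CommRing R]

def triangularSubgroup (π : R) (n : ℕ) : Subgroup (GL (Fin 2) R) where
  carrier := {γ | γ 1 0 = 0 ∧ π ∣ γ 0 1 ∧ π ∣ γ 1 1 - 1 ∧ (γ 0 0 * γ 1 1) ^ n = 1}
  mul_mem' := by
    rintro a b ⟨ha₁₀, ha₀₁, ha₁₁, ha⟩ ⟨hb₁₀, hb₀₁, hb₁₁, hb⟩
    simp only [Set.mem_ofPred_eq, Matrix.GeneralLinearGroup.coe_mul, Matrix.mul_apply,
      Fin.sum_univ_two, ha₁₀, hb₁₀]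
    refine ⟨by ring, ?_, ?_, ?_⟩
    · exact dvd_add (dvd_mul_of_dvd_right hb₀₁ _) (dvd_mul_of_dvd_left ha₀₁ _)
    · have : a 1 1 * b 1 1 - 1 = (a 1 1 - 1) * b 1 1 + (b 1 1 - 1) := by ring
      simpa [this] using dvd_add (dvd_mul_of_dvd_left ha₁₁ _) hb₁₁
    · calc _ = ((a 0 0 * a 1 1) * (b 0 0 * b 1 1)) ^ n := by ring
        _ = 1 := by rw [mul_pow, ha, hb, one_mul]
  one_mem' := by simp
  inv_mem' := by
    rintro γ ⟨h₁₀, h₀₁, h₁₁, hdiag⟩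
    have hdet : (γ : Matrix (Fin 2) (Fin 2) R).det = γ 0 0 * γ 1 1 := by
      rw [Matrix.det_fin_two, h₁₀, mul_zero, sub_zero]
    set D := Ring.inverse (γ 0 0 * γ 1 1)
    have hD : D * (γ 0 0 * γ 1 1) = 1 :=
      Ring.inverse_mul_cancel _ (hdet ▸ Matrix.isUnits_det_units γ)
    have hinv : ((γ⁻¹ : GL (Fin 2) R) : Matrix (Fin 2) (Fin 2) R) =
        !![D * γ 1 1, -(D * γ 0 1); 0, D * γ 0 0] := by
      rw [Matrix.coe_units_inv, Matrix.inv_def, hdet, Matrix.adjugate_fin_two, h₁₀]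
      ext i j; fin_cases i <;> fin_cases j <;> simp [D]
    simp only [Set.mem_ofPred_eq, hinv]
    refine ⟨by simp, by simpa using dvd_mul_of_dvd_right h₀₁ D, ?_, ?_⟩
    · obtain ⟨c, hc⟩ := h₁₁
      exact ⟨-(D * γ 0 0) * c, by simp; linear_combination (-(D * γ 0 0)) * hc + hD⟩
    · have hDn : D ^ n = 1 :=
        calc D ^ n = D ^ n * (γ 0 0 * γ 1 1) ^ n := by rw [hdiag, mul_one]
          _ = 1 := by rw [← mul_pow, hD, one_pow]
      calc _ = (D * (D * (γ 0 0 * γ 1 1))) ^ n := by simp; ring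
        _ = 1 := by rw [hD, mul_one, hDn]

theorem Matrix.GeneralLinearGroup.mul_apply_one_one {γ δ : GL (Fin 2) R} (h : γ 1 0 = 0) :
    (γ * δ) 1 1 = γ 1 1 * δ 1 1 := by
  rw [Matrix.GeneralLinearGroup.coe_mul, Matrix.mul_apply, Fin.sum_univ_two, h, zero_mul, zero_add]

theorem mem_triangularSubgroup {π : R} {n : ℕ} {γ : GL (Fin 2) R} :
    γ ∈ triangularSubgroup π n ↔
      γ 1 0 = 0 ∧ π ∣ γ 0 1 ∧ π ∣ γ 1 1 - 1 ∧ (γ 0 0 * γ 1 1) ^ n = 1 :=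
  Iff.rfl

end TriangularSubgroup

section SquareZero

variable {R : Type*} [CommRing R]

theorem one_add_pow_of_mul_self_eq_zero {x : R} (hx : x * x = 0) (n : ℕ) :
    (1 + x) ^ n = 1 + n * x := by
  induction n with
  | zero => simp
  | succ n ih => rw [pow_succ, ih]; push_cast; linear_combination (n : R) * hx

theorem eq_zero_of_one_add_pow_eq_one {x : R} (hx : x * x = 0) {n : ℕ} (hn : IsUnit (n : R))
    (h : (1 + x) ^ n = 1) : x = 0 := by
  rw [one_add_pow_of_mul_self_eq_zero hx, add_eq_left] at h
  exact hn.mul_right_eq_zero.mp h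

variable {π : R} (hπ : π * π = 0)
include hπ

theorem eq_one_of_dvd_sub_one_of_pow_eq_one {n : ℕ} (hn : IsUnit (n : R)) {ω : R}
    (hdvd : π ∣ ω - 1) (hω : ω ^ n = 1) : ω = 1 := by
  obtain ⟨c, hc⟩ := hdvd
  have hsq : (ω - 1) * (ω - 1) = 0 := by rw [hc]; linear_combination c * c * hπ
  have := eq_zero_of_one_add_pow_eq_one hsq hn (by rwa [add_sub_cancel])
  exact sub_eq_zero.mp this

variable (hloc : ∀ x : R, IsUnit x ∨ π ∣ x)
include hloc

theorem dvd_of_dvd_of_ne_zero {b c : R} (hb : π ∣ b) (hc : π ∣ c) (hc0 : c ≠ 0) : c ∣ b := by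
  obtain ⟨s, rfl⟩ := hb
  obtain ⟨t, rfl⟩ := hc
  rcases hloc t with ⟨u, rfl⟩ | ⟨r, rfl⟩
  · exact ⟨↑u⁻¹ * s, by rw [← mul_assoc, mul_assoc π, Units.mul_inv, mul_one]⟩
  · exact absurd (by rw [← mul_assoc, hπ, zero_mul]) hc0

theorem eq_one_or_dvd_of_mem_triangularSubgroup {n : ℕ} (hn : IsUnit (n : R))
    {γ : GL (Fin 2) R} (hγ : γ ∈ triangularSubgroup π n) :
    γ 1 1 = 1 ∨ γ 0 0 - 1 ∣ γ 0 1 := by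
  obtain ⟨-, h₀₁, h₁₁, hdiag⟩ := hγ
  rcases hloc (γ 0 0 - 1) with hu | h₀₀
  · exact Or.inr hu.dvd
  have hprod : γ 0 0 * γ 1 1 = 1 := by
    refine eq_one_of_dvd_sub_one_of_pow_eq_one hπ hn ?_ hdiag
    have : γ 0 0 * γ 1 1 - 1 = (γ 0 0 - 1) * γ 1 1 + (γ 1 1 - 1) := by ring
    rw [this]; exact dvd_add (dvd_mul_of_dvd_left h₀₀ _) h₁₁
  by_cases hd : γ 1 1 = 1
  · exact Or.inl hd
  · right
    have : γ 0 0 - 1 = -γ 0 0 * (γ 1 1 - 1) := by linear_combination hprod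
    rw [this, (IsUnit.of_mul_eq_one _ hprod).neg.mul_left_dvd]
    exact dvd_of_dvd_of_ne_zero hπ hloc h₀₁ h₁₁ (sub_ne_zero.mpr hd)

end SquareZero

section UpperCocycle

variable {N : ℕ} {G : Subgroup (GL (Fin 2) (ZMod N))}

def upperCocycle (G : Subgroup (GL (Fin 2) (ZMod N))) : G → Fin 2 → ZMod N :=
  fun γ => ![0, 1 - (γ : GL (Fin 2) (ZMod N)) 1 1]

theorem glAct_vec2 (γ : GL (Fin 2) (ZMod N)) (x y : ZMod N) :
    glAct γ ![x, y] = ![γ 0 0 * x + γ 0 1 * y, γ 1 0 * x + γ 1 1 * y] := by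
  rw [glAct, Matrix.mulVec_fin_two]
  rfl

theorem glAct_apply (γ : GL (Fin 2) (ZMod N)) (v : Fin 2 → ZMod N) (i : Fin 2) :
    glAct γ v i = γ i 0 * v 0 + γ i 1 * v 1 := by
  rw [glAct, Matrix.mulVec, dotProduct, Fin.sum_univ_two]

variable {π : ZMod N} {n : ℕ}

theorem isCocycle_upperCocycle (hπ : π * π = 0) (hG : G ≤ triangularSubgroup π n) :
    IsCocycle G (upperCocycle G) := by
  intro a b
  obtain ⟨ha₁₀, ⟨x, hx⟩, -, -⟩ := hG a.2
  obtain ⟨-, -, ⟨y, hy⟩, -⟩ := hG b.2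
  rw [upperCocycle, upperCocycle, upperCocycle, glAct_vec2, vec2_add, Subgroup.coe_mul,
    Matrix.GeneralLinearGroup.mul_apply_one_one ha₁₀]
  refine vec2_eq ?_ (by ring)
  rw [hx]; linear_combination π * x * hy + x * y * hπ

theorem exists_upperCocycle_eq_glAct_sub {γ : GL (Fin 2) (ZMod N)} (h₁₀ : γ 1 0 = 0)
    (hdvd : γ 0 0 - 1 ∣ γ 0 1) :
    ∃ v, ![0, 1 - γ 1 1] = glAct γ v - v := by
  obtain ⟨w, hw⟩ := hdvd
  refine ⟨![w, -1], ?_⟩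
  rw [eq_sub_iff_add_eq, vec2_add, glAct_vec2, h₁₀, hw]
  exact vec2_eq (by ring) (by ring)

theorem satisfiesLocalConditions_upperCocycle (hπ : π * π = 0)
    (hloc : ∀ x : ZMod N, IsUnit x ∨ π ∣ x) (hn : IsUnit (n : ZMod N))
    (hG : G ≤ triangularSubgroup π n) :
    SatisfiesLocalConditions G (upperCocycle G) := by
  intro γ
  rcases eq_one_or_dvd_of_mem_triangularSubgroup hπ hloc hn (hG γ.2) with h₁₁ | hdvd
  · exact ⟨0, by simp [upperCocycle, h₁₁, glAct]⟩
  · exact exists_upperCocycle_eq_glAct_sub (hG γ.2).1 hdvd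

theorem not_isCoboundary_upperCocycle (hπ : π ≠ 0) {h₁ h₂ : GL (Fin 2) (ZMod N)}
    (hh₁ : (h₁ : Matrix (Fin 2) (Fin 2) (ZMod N)) = !![1 + π, 0; 0, 1 - π])
    (hh₂ : (h₂ : Matrix (Fin 2) (Fin 2) (ZMod N)) = !![1, π; 0, 1])
    (hm₁ : h₁ ∈ G) (hm₂ : h₂ ∈ G) :
    ¬ IsCoboundary G (upperCocycle G) := by
  rintro ⟨v, hv⟩
  have e₁ : π = (1 - π) * v 1 - v 1 := by
    simpa [upperCocycle, glAct_apply, hh₁] using congrFun (hv ⟨h₁, hm₁⟩) 1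
  have e₂ : 0 = π * v 1 := by
    simpa [upperCocycle, glAct_apply, hh₂] using congrFun (hv ⟨h₂, hm₂⟩) 0
  exact hπ (by linear_combination e₁ + e₂)

end UpperCocycle

theorem ZMod.isUnit_or_natCast_dvd {p : ℕ} (hp : p.Prime) (k : ℕ) (x : ZMod (p ^ k)) :
    IsUnit x ∨ (p : ZMod (p ^ k)) ∣ x := by
  have : NeZero (p ^ k) := ⟨pow_ne_zero k hp.ne_zero⟩
  rw [← ZMod.natCast_zmod_val x]
  by_cases hdvd : p ∣ x.val
  · exact Or.inr (Nat.cast_dvd_cast hdvd)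
  · exact Or.inl ((ZMod.isUnit_iff_coprime _ _).mpr
      (((Nat.coprime_comm.mp (hp.coprime_iff_not_dvd.mpr hdvd))).pow_right k))

theorem h1loc_nonzero_cyclic_case_general
    (p : ℕ) (hp : p.Prime)
    (lam : (ZMod (p ^ 2))ˣ) (hlam : lam ^ (p - 1) = 1)
    (g h₁ h₂ : GL (Fin 2) (ZMod (p ^ 2)))
    (hg : (g : Matrix (Fin 2) (Fin 2) (ZMod (p ^ 2))) =
      !![(lam : ZMod (p ^ 2)), 0; 0, 1])
    (hh₁ : (h₁ : Matrix (Fin 2) (Fin 2) (ZMod (p ^ 2))) =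
      !![1 + (p : ZMod (p ^ 2)), 0; 0, 1 - (p : ZMod (p ^ 2))])
    (hh₂ : (h₂ : Matrix (Fin 2) (Fin 2) (ZMod (p ^ 2))) =
      !![1, (p : ZMod (p ^ 2)); 0, 1]) :
    ∃ Z : (Subgroup.closure ({g, h₁, h₂} : Set (GL (Fin 2) (ZMod (p ^ 2))))) →
        (Fin 2 → ZMod (p ^ 2)),
      IsCocycle _ Z ∧ SatisfiesLocalConditions _ Z ∧ ¬ IsCoboundary _ Z := by
  have hp0 : (p : ZMod (p ^ 2)) ≠ 0 := by
    rw [Ne, ZMod.natCast_eq_zero_iff]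
    simpa using Nat.pow_dvd_pow_iff_le_right hp.one_lt (k := 2) (l := 1)
  have hpp : (p : ZMod (p ^ 2)) * p = 0 := by
    rw [← Nat.cast_mul, ← sq, ZMod.natCast_self]
  have hunit : IsUnit ((p - 1 : ℕ) : ZMod (p ^ 2)) := by
    rw [Nat.cast_sub hp.one_le, Nat.cast_one]
    exact IsNilpotent.isUnit_sub_one ⟨2, (pow_two _).trans hpp⟩
  have hG : Subgroup.closure {g, h₁, h₂} ≤ triangularSubgroup (p : ZMod (p ^ 2)) (p - 1) := by
    rw [Subgroup.closure_le]
    rintro γ (rfl | rfl | rfl)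
    · simpa [mem_triangularSubgroup, hg] using congrArg Units.val hlam
    · have : (1 + (p : ZMod (p ^ 2))) * (1 - p) = 1 := by linear_combination -hpp
      simp [mem_triangularSubgroup, hh₁, this]
    · simp [mem_triangularSubgroup, hh₂]
  exact ⟨upperCocycle _, isCocycle_upperCocycle hpp hG,
    satisfiesLocalConditions_upperCocycle hpp (ZMod.isUnit_or_natCast_dvd hp 2) hunit hG,
    not_isCoboundary_upperCocycle hp0 hh₁ hh₂ (Subgroup.subset_closure (by simp))
      (Subgroup.subset_closure (by simp))⟩

/-- Let `p` be an odd prime, `λ ∈ (ZMod p²)ˣ` of order dividing `p-1`, and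
`G ≤ GL₂(ZMod p²)` generated by `g = diag(λ, 1)`, `h(1,0) = [[1+p,0],[0,1-p]]`
and `h(0,1) = [[1,p],[0,1]]`. Then `H¹_loc(G, (ZMod p²)²) ≠ 0`: there is a
cocycle satisfying the local conditions which is not a coboundary. -/
theorem h1loc_nonzero_cyclic_case
    (p : ℕ) (hp : p.Prime) (hodd : Odd p)
    (lam : (ZMod (p ^ 2))ˣ) (hlam : lam ^ (p - 1) = 1)
    (g h₁ h₂ : GL (Fin 2) (ZMod (p ^ 2)))
    (hg : (g : Matrix (Fin 2) (Fin 2) (ZMod (p ^ 2))) =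
      !![(lam : ZMod (p ^ 2)), 0; 0, 1])
    (hh₁ : (h₁ : Matrix (Fin 2) (Fin 2) (ZMod (p ^ 2))) =
      !![1 + (p : ZMod (p ^ 2)), 0; 0, 1 - (p : ZMod (p ^ 2))])
    (hh₂ : (h₂ : Matrix (Fin 2) (Fin 2) (ZMod (p ^ 2))) =
      !![1, (p : ZMod (p ^ 2)); 0, 1]) :
    ∃ Z : (Subgroup.closure ({g, h₁, h₂} : Set (GL (Fin 2) (ZMod (p ^ 2))))) →
        (Fin 2 → ZMod (p ^ 2)),
      IsCocycle _ Z ∧ SatisfiesLocalConditions _ Z ∧ ¬ IsCoboundary _ Z :=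
  h1loc_nonzero_cyclic_case_general p hp lam hlam g h₁ h₂ hg hh₁ hh₂
end

section
/- Let p be an odd prime, V = (Z/p²Z)², and G ≤ GL₂(Z/p²Z) generated by g = [[1,0],[0,-1]], σ = [[1+p,1],[2p,1+p]], and h = [[1+p,0],[0,1-p]]. Then H¹_loc(G, V) ≠ 0. -/
open Matrix

/-! Put `ε = p`, so that `ε² = 0`. The generators lie in the group of matrices
`[[a, b], [2εe·b, d]]` with `a ≡ 1`, `d ≡ e (mod ε)` and determinant `e = ±1`, and on this group
`Z(M) = (M₀₀ - 1 - ε·M₀₁², 0)` is a cocycle: `ε` kills every multiple of `ε`, so the cross terms of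
a product collapse. Each `Z(M)` has the form `(M - 1)v`: take `v = (0, M₀₁⁻¹·Z(M)₀)` if `e = 1`
and `M₀₁` is a unit, and `v = (1, -ε·M₀₁)` otherwise, when `(e + 1)·ε·M₀₁ = 0`. But a single `v`
serving `g`, `σ` and `h` at once forces `2ε = 0`, which fails for odd `p`. -/

section

variable {R : Type*} [CommRing R] {ε : R}

theorem mul_eq_zero_of_dvd_of_dvd (hε : ε * ε = 0) {x y : R} (hx : ε ∣ x) (hy : ε ∣ y) :
    x * y = 0 := by
  obtain ⟨a, rfl⟩ := hx
  obtain ⟨b, rfl⟩ := hy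
  linear_combination (a * b) * hε

theorem mul_eq_mul_of_dvd_sub (hε : ε * ε = 0) {x y : R} (h : ε ∣ x - y) : ε * x = ε * y :=
  sub_eq_zero.mp (by rw [← mul_sub]; exact mul_eq_zero_of_dvd_of_dvd hε dvd_rfl h)

theorem mul_self_eq_one_of_eq_one_or_eq_neg_one {e : R} (he : e = 1 ∨ e = -1) : e * e = 1 := by
  rcases he with rfl | rfl <;> norm_num

variable (ε) in
def IsBorelLift (e : R) (M : Matrix (Fin 2) (Fin 2) R) : Prop :=
  ε ∣ M 0 0 - 1 ∧ ε ∣ M 1 1 - e ∧ M 1 0 = 2 * ε * e * M 0 1 ∧ M.det = e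

variable (ε) in
def borelCocycle (M : Matrix (Fin 2) (Fin 2) R) : Fin 2 → R :=
  ![M 0 0 - 1 - ε * M 0 1 ^ 2, 0]

namespace IsBorelLift

variable {e e' : R} {A B : Matrix (Fin 2) (Fin 2) R}

theorem one : IsBorelLift ε 1 (1 : Matrix (Fin 2) (Fin 2) R) := by
  simp [IsBorelLift]

theorem mul (hε : ε * ε = 0) (he' : e' * e' = 1) (hA : IsBorelLift ε e A)
    (hB : IsBorelLift ε e' B) : IsBorelLift ε (e * e') (A * B) := by
  obtain ⟨hA00, hA11, hA10, hAdet⟩ := hA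
  obtain ⟨hB00, hB11, hB10, hBdet⟩ := hB
  have hεA00 := mul_eq_mul_of_dvd_sub hε hA00
  have hεA11 := mul_eq_mul_of_dvd_sub hε hA11
  have hεB00 := mul_eq_mul_of_dvd_sub hε hB00
  have hεB11 := mul_eq_mul_of_dvd_sub hε hB11
  refine ⟨?_, ?_, ?_, by rw [det_mul, hAdet, hBdet]⟩
  · have : (A * B) 0 0 - 1 = (A 0 0 - 1) * B 0 0 + (B 0 0 - 1) + A 0 1 * B 1 0 := by
      simp only [mul_apply, Fin.sum_univ_two]; ring
    rw [this, hB10]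
    exact ((hA00.mul_right _).add hB00).add (Dvd.intro (2 * e' * B 0 1 * A 0 1) (by ring))
  · have : (A * B) 1 1 - e * e' = A 1 0 * B 0 1 + (A 1 1 - e) * B 1 1 + e * (B 1 1 - e') := by
      simp only [mul_apply, Fin.sum_univ_two]; ring
    rw [this, hA10]
    exact ((Dvd.intro (2 * e * A 0 1 * B 0 1) (by ring)).add (hA11.mul_right _)).add
      (hB11.mul_left _)
  · simp only [mul_apply, Fin.sum_univ_two]
    linear_combination B 0 0 * hA10 + A 1 1 * hB10 + 2 * e * A 0 1 * hεB00
      - 2 * e * e' * A 0 1 * hεB11 + 2 * e' * B 0 1 * hεA11 - 2 * e * e' * B 0 1 * hεA00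
      - 2 * e * A 0 1 * ε * he'

theorem mul_smul_adjugate (he : e * e = 1) (hA : IsBorelLift ε e A) :
    A * (e • A.adjugate) = 1 := by
  rw [Matrix.mul_smul, mul_adjugate, hA.2.2.2, smul_smul, he, one_smul]

theorem smul_adjugate (he : e * e = 1) (hA : IsBorelLift ε e A) :
    IsBorelLift ε e (e • A.adjugate) := by
  obtain ⟨hA00, hA11, hA10, hAdet⟩ := hA
  have hdet : (e • A.adjugate).det = e := by
    rw [det_smul, det_adjugate, hAdet, Fintype.card_fin]
    linear_combination e * he
  refine ⟨?_, ?_, ?_, hdet⟩ <;>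
    simp only [adjugate_fin_two, Matrix.smul_apply, of_apply, cons_val', cons_val_zero,
      cons_val_one, cons_val_fin_one, smul_eq_mul, mul_neg, neg_inj]
  · rw [show e * A 1 1 - 1 = e * (A 1 1 - e) by linear_combination he]
    exact hA11.mul_left _
  · rw [show e * A 0 0 - e = e * (A 0 0 - 1) by ring]
    exact hA00.mul_left _
  · linear_combination e * hA10

theorem dvd_borelCocycle (hA : IsBorelLift ε e A) (i : Fin 2) : ε ∣ borelCocycle ε A i := by
  fin_cases i
  · exact hA.1.sub (Dvd.intro _ rfl)
  · exact dvd_zero ε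

theorem borelCocycle_mul (hε : ε * ε = 0) (he' : e' * e' = 1) (hA : IsBorelLift ε e A)
    (hB : IsBorelLift ε e' B) :
    borelCocycle ε (A * B) = A *ᵥ borelCocycle ε B + borelCocycle ε A := by
  have hεA00 := mul_eq_mul_of_dvd_sub hε hA.1
  have hεB11 := mul_eq_mul_of_dvd_sub hε hB.2.1
  have hA10 : ε ∣ A 1 0 := hA.2.2.1 ▸ Dvd.intro (2 * e * A 0 1) (by ring)
  ext i
  fin_cases i <;> simp only [borelCocycle, mulVec_fin_two, mul_apply, Fin.sum_univ_two,
    Pi.add_apply, Fin.isValue, Fin.zero_eta, Fin.mk_one, cons_val_zero, cons_val_one,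
    cons_val_fin_one, mul_zero, add_zero]
  · linear_combination A 0 1 * hB.2.2.1
      - (A 0 0 * B 0 1 ^ 2 + 2 * A 0 1 * B 0 1 * B 1 1) * hεA00
      - (2 * A 0 1 * B 0 1 + A 0 1 ^ 2 * (B 1 1 + e')) * hεB11 - ε * A 0 1 ^ 2 * he'
  · exact (mul_eq_zero_of_dvd_of_dvd hε hA10 (hB.dvd_borelCocycle 0)).symm

theorem exists_borelCocycle_eq_mulVec_sub_of_isUnit (hε : ε * ε = 0) (hA : IsBorelLift ε 1 A)
    (hu : IsUnit (A 0 1)) : ∃ v, borelCocycle ε A = A *ᵥ v - v := by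
  refine ⟨![0, Ring.inverse (A 0 1) * (A 0 0 - 1 - ε * A 0 1 ^ 2)], ?_⟩
  have hinv := Ring.mul_inverse_cancel _ hu
  have h11 : (A 1 1 - 1) * (A 0 0 - 1 - ε * A 0 1 ^ 2) = 0 :=
    mul_eq_zero_of_dvd_of_dvd hε hA.2.1 (hA.dvd_borelCocycle 0)
  ext i
  fin_cases i <;> simp only [borelCocycle, mulVec_fin_two, Pi.sub_apply, Fin.isValue, Fin.zero_eta,
    Fin.mk_one, cons_val_zero, cons_val_one, cons_val_fin_one, mul_zero, zero_add, sub_zero]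
  · linear_combination -(A 0 0 - 1 - ε * A 0 1 ^ 2) * hinv
  · linear_combination -Ring.inverse (A 0 1) * h11

theorem exists_borelCocycle_eq_mulVec_sub_of_mul_eq_zero (hε : ε * ε = 0)
    (hA : IsBorelLift ε e A) (h : (e + 1) * (ε * A 0 1) = 0) :
    ∃ v, borelCocycle ε A = A *ᵥ v - v := by
  refine ⟨![1, -(ε * A 0 1)], ?_⟩
  have hεA11 := mul_eq_mul_of_dvd_sub hε hA.2.1
  ext i
  fin_cases i <;> simp only [borelCocycle, mulVec_fin_two, Pi.sub_apply, Fin.isValue, Fin.zero_eta,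
    Fin.mk_one, cons_val_zero, cons_val_one, cons_val_fin_one]
  · ring
  · linear_combination -hA.2.2.1 + A 0 1 * hεA11 - h

theorem exists_borelCocycle_eq_mulVec_sub (hε : ε * ε = 0) (he : e = 1 ∨ e = -1)
    (hA : IsBorelLift ε e A) (h01 : IsUnit (A 0 1) ∨ ε * A 0 1 = 0) :
    ∃ v, borelCocycle ε A = A *ᵥ v - v := by
  rcases he with rfl | rfl
  · rcases h01 with hu | h0
    · exact hA.exists_borelCocycle_eq_mulVec_sub_of_isUnit hε hu
    · exact hA.exists_borelCocycle_eq_mulVec_sub_of_mul_eq_zero hε (by rw [h0, mul_zero])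
  · exact hA.exists_borelCocycle_eq_mulVec_sub_of_mul_eq_zero hε (by ring)

end IsBorelLift

theorem isBorelLift_diag_one_neg_one : IsBorelLift ε (-1) !![1, 0; 0, -1] := by
  simp [IsBorelLift, det_fin_two]

theorem isBorelLift_one_add_one_two_mul_one_add (hε : ε * ε = 0) :
    IsBorelLift ε 1 !![1 + ε, 1; 2 * ε, 1 + ε] := by
  refine ⟨by simp, by simp, by simp, ?_⟩
  simp only [det_fin_two_of]
  linear_combination hε

theorem isBorelLift_diag_one_add_one_sub (hε : ε * ε = 0) :
    IsBorelLift ε 1 !![1 + ε, 0; 0, 1 - ε] := by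
  refine ⟨by simp, ⟨-1, by simp⟩, by simp, ?_⟩
  simp only [det_fin_two_of]
  linear_combination -hε

variable (ε) in
def borelLift (hε : ε * ε = 0) : Subgroup (GL (Fin 2) R) where
  carrier := {a | ∃ e : R, (e = 1 ∨ e = -1) ∧ IsBorelLift ε e a}
  one_mem' := ⟨1, .inl rfl, IsBorelLift.one⟩
  mul_mem' := by
    rintro a b ⟨e, he, ha⟩ ⟨e', he', hb⟩
    refine ⟨e * e', ?_, ha.mul hε (mul_self_eq_one_of_eq_one_or_eq_neg_one he') hb⟩
    rcases he with rfl | rfl <;> rcases he' with rfl | rfl <;> norm_num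
  inv_mem' := by
    rintro a ⟨e, he, ha⟩
    have he2 := mul_self_eq_one_of_eq_one_or_eq_neg_one he
    refine ⟨e, he, ?_⟩
    rw [Units.inv_eq_of_mul_eq_one_right (ha.mul_smul_adjugate he2)]
    exact ha.smul_adjugate he2

section borelLift

variable {hε : ε * ε = 0} {a b : GL (Fin 2) R}

theorem borelCocycle_mul_of_mem (ha : a ∈ borelLift ε hε) (hb : b ∈ borelLift ε hε) :
    borelCocycle ε ↑(a * b) = ↑a *ᵥ borelCocycle ε ↑b + borelCocycle ε ↑a := by
  obtain ⟨e, -, ha⟩ := ha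
  obtain ⟨e', he', hb⟩ := hb
  exact ha.borelCocycle_mul hε (mul_self_eq_one_of_eq_one_or_eq_neg_one he') hb

theorem exists_borelCocycle_eq_mulVec_sub_of_mem (ha : a ∈ borelLift ε hε)
    (h01 : IsUnit ((a : Matrix (Fin 2) (Fin 2) R) 0 1) ∨
      ε * (a : Matrix (Fin 2) (Fin 2) R) 0 1 = 0) :
    ∃ v, borelCocycle ε ↑a = ↑a *ᵥ v - v := by
  obtain ⟨e, he, ha⟩ := ha
  exact ha.exists_borelCocycle_eq_mulVec_sub hε he h01

end borelLift

theorem two_mul_eq_zero_of_borelCocycle_eq_mulVec_sub {v : Fin 2 → R}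
    (hg : borelCocycle ε !![1, 0; 0, -1] = !![1, 0; 0, -1] *ᵥ v - v)
    (hσ : borelCocycle ε !![1 + ε, 1; 2 * ε, 1 + ε] = !![1 + ε, 1; 2 * ε, 1 + ε] *ᵥ v - v)
    (hh : borelCocycle ε !![1 + ε, 0; 0, 1 - ε] = !![1 + ε, 0; 0, 1 - ε] *ᵥ v - v) :
    2 * ε = 0 := by
  have hg1 : -v 1 - v 1 = 0 := by simpa [borelCocycle, vecHead, vecTail] using (congrFun hg 1).symm
  have hσ0 : ε * v 0 + v 1 = 0 := by
    simpa [borelCocycle, vecHead, vecTail, add_mul, add_assoc] using (congrFun hσ 0).symm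
  have hh0 : ε * v 0 = ε := by
    simpa [borelCocycle, vecHead, vecTail, add_mul] using (congrFun hh 0).symm
  linear_combination -2 * hh0 + 2 * hσ0 + hg1

end

namespace ZMod

theorem natCast_mul_self_eq_zero_s14 (p : ℕ) : (p : ZMod (p ^ 2)) * p = 0 := by
  rw [← Nat.cast_mul, ← sq, natCast_self]

theorem isUnit_or_natCast_mul_eq_zero {p : ℕ} (hp : p.Prime) (x : ZMod (p ^ 2)) :
    IsUnit x ∨ (p : ZMod (p ^ 2)) * x = 0 := by
  have : NeZero (p ^ 2) := ⟨pow_ne_zero 2 hp.ne_zero⟩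
  rw [or_iff_not_imp_left]
  intro hx
  obtain ⟨k, hk⟩ : p ∣ x.val := by
    by_contra hpx
    rw [← natCast_zmod_val x, isUnit_iff_coprime] at hx
    exact hx ((hp.coprime_iff_not_dvd.mpr hpx).pow_left 2).symm
  rw [← natCast_zmod_val x, hk, Nat.cast_mul, ← mul_assoc, natCast_mul_self_eq_zero_s14, zero_mul]

theorem two_mul_natCast_ne_zero {p : ℕ} (hp : p.Prime) (hodd : Odd p) :
    2 * (p : ZMod (p ^ 2)) ≠ 0 := by
  intro h
  have hdvd : p * p ∣ 2 * p := by
    rw [← sq, ← natCast_eq_zero_iff]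
    exact_mod_cast h
  have := Nat.le_of_dvd two_pos (Nat.dvd_of_mul_dvd_mul_right hp.pos hdvd)
  obtain ⟨k, rfl⟩ := hodd
  have := hp.two_le
  omega

end ZMod

/-- Let `p` be an odd prime and `G ≤ GL₂(ZMod p²)` generated by
`g = [[1,0],[0,-1]]`, `σ = [[1+p,1],[2p,1+p]]` and `h = [[1+p,0],[0,1-p]]`.
Then `H¹_loc(G, (ZMod p²)²) ≠ 0`: there is a cocycle satisfying the local
conditions which is not a coboundary. -/
theorem h1loc_nonzero_borel_case
    (p : ℕ) (hp : p.Prime) (hodd : Odd p)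
    (g σ h : GL (Fin 2) (ZMod (p ^ 2)))
    (hg : (g : Matrix (Fin 2) (Fin 2) (ZMod (p ^ 2))) = !![1, 0; 0, -1])
    (hσ : (σ : Matrix (Fin 2) (Fin 2) (ZMod (p ^ 2))) =
      !![1 + (p : ZMod (p ^ 2)), 1; 2 * (p : ZMod (p ^ 2)), 1 + (p : ZMod (p ^ 2))])
    (hh : (h : Matrix (Fin 2) (Fin 2) (ZMod (p ^ 2))) =
      !![1 + (p : ZMod (p ^ 2)), 0; 0, 1 - (p : ZMod (p ^ 2))]) :
    ∃ Z : (Subgroup.closure ({g, σ, h} : Set (GL (Fin 2) (ZMod (p ^ 2))))) →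
        (Fin 2 → ZMod (p ^ 2)),
      IsCocycle _ Z ∧ SatisfiesLocalConditions _ Z ∧ ¬ IsCoboundary _ Z := by
  have hε := ZMod.natCast_mul_self_eq_zero_s14 p
  have hG : Subgroup.closure {g, σ, h} ≤ borelLift (p : ZMod (p ^ 2)) hε := by
    rw [Subgroup.closure_le]
    rintro _ (rfl | rfl | rfl)
    · exact ⟨-1, .inr rfl, hg ▸ isBorelLift_diag_one_neg_one⟩
    · exact ⟨1, .inl rfl, hσ ▸ isBorelLift_one_add_one_two_mul_one_add hε⟩
    · exact ⟨1, .inl rfl, hh ▸ isBorelLift_diag_one_add_one_sub hε⟩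
  refine ⟨fun a => borelCocycle (p : ZMod (p ^ 2)) ↑(a : GL (Fin 2) (ZMod (p ^ 2))),
    fun a b => borelCocycle_mul_of_mem (hG a.2) (hG b.2),
    fun a => exists_borelCocycle_eq_mulVec_sub_of_mem (hG a.2)
      (ZMod.isUnit_or_natCast_mul_eq_zero hp _), ?_⟩
  rintro ⟨v, hv⟩
  have hcob : ∀ x ∈ ({g, σ, h} : Set (GL (Fin 2) (ZMod (p ^ 2)))),
      borelCocycle (p : ZMod (p ^ 2)) ↑x = ↑x *ᵥ v - v :=
    fun x hx => hv ⟨x, Subgroup.subset_closure hx⟩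
  refine ZMod.two_mul_natCast_ne_zero hp hodd
    (two_mul_eq_zero_of_borelCocycle_eq_mulVec_sub (v := v) ?_ ?_ ?_)
  · simpa only [hg] using hcob g (by simp)
  · simpa only [hσ] using hcob σ (by simp)
  · simpa only [hh] using hcob h (by simp)
end
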